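/- For every ε > 0, P(n) ≪_ε n^{1/3 + ε}, where P(n) = max_{1 ≤ a ≤ n} P(a,n) is the maximal number of iterations of x ↦ n mod x needed to reach 0 from any starting value a ≤ n. -/

import Mathlib

/-- The iteration `a_0 = a`, `a_{j+1} = n mod a_j`. -/
def pseq (n a : ℕ) : ℕ → ℕ
  | 0 => a
  | j + 1 => n % pseq n a j


/-- `P(a,n)`: the least `k ≥ 1` with `a_k = 0`. -/
noncomputable def Psteps (n a : ℕ) : ℕ := sInf {k | 0 < k ∧ pseq n a k = 0}


/-- `P(n) = max_{1 ≤ a ≤ n} P(a,n)`. -/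
noncomputable def Pmax (n : ℕ) : ℕ := (Finset.Icc 1 n).sup (fun a => Psteps n a)

/-!
Along the orbit `a = a_0 > a_1 > ⋯ > a_P = 0` the quotients `n / a_j` strictly increase, so
`j ≤ n / a_j` and at most `n / B + 1` steps are spent at values `≥ B`. From a value `b < B`,
a step `b ↦ n % b` with jump `g = b - n % b` forces `b ∣ n + g`; as the values are distinct,
steps with jump `g < D` number at most `∑_{g < D} d(n + g)`, and since the jumps add up to at
most `B`, at most `B / D` steps have jump `≥ D`. Take `B = D²` with `D = ⌈n^{1/3}⌉`
and use the divisor bound `d(m) ≪_ε m^ε`.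
-/

open Finset Nat

lemma Nat.div_lt_div_mod {n b : ℕ} (h : 0 < n % b) : n / b < n / (n % b) := by
  refine (Nat.le_div_iff_mul_le h).2 ?_
  have hquot : n / b * (n % b) ≤ n / b * b := by
    rcases b.eq_zero_or_pos with rfl | hb
    · simp
    · exact Nat.mul_le_mul_left _ (Nat.mod_lt n hb).le
  have := Nat.div_add_mod n b
  nlinarith

lemma Nat.dvd_add_sub_mod (n : ℕ) {b : ℕ} (hb : 0 < b) : b ∣ n + (b - n % b) := by
  have h : n + (b - n % b) = b * (n / b + 1) := by
    have := Nat.div_add_mod n b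
    have := Nat.mod_lt n hb
    rw [mul_add, mul_one]; omega
  exact h ▸ dvd_mul_right _ _

lemma Finset.sum_range_tsub_add_eq {f : ℕ → ℕ} {n : ℕ} (hf : ∀ i < n, f (i + 1) ≤ f i) :
    ∑ i ∈ range n, (f i - f (i + 1)) + f n = f 0 := by
  induction n with
  | zero => simp
  | succ n ih =>
    have := hf n n.lt_succ_self
    rw [sum_range_succ, ← ih fun i hi => hf i (by omega)]
    omega

lemma add_one_pow_le_factorial_mul_two_pow (e k : ℕ) : (e + 1) ^ k ≤ k ! * 2 ^ k * 2 ^ e :=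
  calc (e + 1) ^ k ≤ (e + 1).ascFactorial k := pow_succ_le_ascFactorial _ _
    _ = k ! * (e + k).choose k := ascFactorial_eq_factorial_mul_choose e k
    _ ≤ k ! * 2 ^ (e + k) := Nat.mul_le_mul_left _ (choose_le_two_pow _ _)
    _ = k ! * 2 ^ k * 2 ^ e := by ring

/-- Primes `p ≥ 2 ^ k` contribute `(e + 1) ^ k ≤ p ^ e`; each of the fewer than `2 ^ k` smaller
primes contributes at most a constant times `p ^ e`. -/
lemma card_divisors_pow_le (k : ℕ) {m : ℕ} (hm : m ≠ 0) :
    #m.divisors ^ k ≤ (k ! * 2 ^ k) ^ 2 ^ k * m := by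
  classical
  set c := k ! * 2 ^ k
  have hfactor : ∀ p ∈ m.primeFactors,
      (m.factorization p + 1) ^ k ≤ (if p < 2 ^ k then c else 1) * p ^ m.factorization p := by
    intro p hp
    have hp2 := (prime_of_mem_primeFactors hp).two_le
    split_ifs with hpk
    · exact (add_one_pow_le_factorial_mul_two_pow _ k).trans
        (Nat.mul_le_mul_left _ (Nat.pow_le_pow_left hp2 _))
    · calc (m.factorization p + 1) ^ k ≤ (2 ^ m.factorization p) ^ k :=
            Nat.pow_le_pow_left Nat.lt_two_pow_self _
        _ = (2 ^ k) ^ m.factorization p := by rw [← pow_mul, ← pow_mul, mul_comm]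
        _ ≤ 1 * p ^ m.factorization p := by rw [one_mul]; exact Nat.pow_le_pow_left (by omega) _
  have hsmall : #{p ∈ m.primeFactors | p < 2 ^ k} ≤ 2 ^ k :=
    (card_le_card fun p hp => mem_range.2 (mem_filter.1 hp).2).trans (card_range _).le
  rw [card_divisors hm, ← prod_pow]
  calc ∏ p ∈ m.primeFactors, (m.factorization p + 1) ^ k
      ≤ ∏ p ∈ m.primeFactors, (if p < 2 ^ k then c else 1) * p ^ m.factorization p :=
        prod_le_prod' hfactor
    _ = c ^ #{p ∈ m.primeFactors | p < 2 ^ k} * m := by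
        rw [prod_mul_distrib, prod_ite, prod_const, prod_const_one, mul_one,
          ← prod_primeFactors_pow_factorization hm]
    _ ≤ c ^ 2 ^ k * m :=
        Nat.mul_le_mul_right _ (Nat.pow_le_pow_right (by positivity) hsmall)

lemma exists_card_divisors_le_rpow {ε : ℝ} (hε : 0 < ε) :
    ∃ C > 0, ∀ m : ℕ, m ≠ 0 → (#m.divisors : ℝ) ≤ C * (m : ℝ) ^ ε := by
  set k := ⌈ε⁻¹⌉₊
  have hk : k ≠ 0 := (Nat.ceil_pos.2 (inv_pos.2 hε)).ne'
  have hkε : (k : ℝ)⁻¹ ≤ ε := inv_le_of_inv_le₀ hε (Nat.le_ceil _)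
  set c : ℕ := (k ! * 2 ^ k) ^ 2 ^ k
  refine ⟨(c : ℝ) ^ (k⁻¹ : ℝ), by positivity, fun m hm => ?_⟩
  have hm1 : (1 : ℝ) ≤ m := Nat.one_le_cast.2 (Nat.pos_of_ne_zero hm)
  have hpow : (#m.divisors : ℝ) ^ k ≤ c * m := by exact_mod_cast card_divisors_pow_le k hm
  calc (#m.divisors : ℝ) = ((#m.divisors : ℝ) ^ k) ^ (k⁻¹ : ℝ) :=
        (Real.pow_rpow_inv_natCast (by positivity) hk).symm
    _ ≤ (c * m) ^ (k⁻¹ : ℝ) := Real.rpow_le_rpow (by positivity) hpow (by positivity)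
    _ = (c : ℝ) ^ (k⁻¹ : ℝ) * (m : ℝ) ^ (k⁻¹ : ℝ) := Real.mul_rpow (by positivity) (by positivity)
    _ ≤ (c : ℝ) ^ (k⁻¹ : ℝ) * (m : ℝ) ^ ε := by gcongr

lemma pseq_add (n a i : ℕ) : ∀ j, pseq n a (i + j) = pseq n (pseq n a i) j
  | 0 => rfl
  | j + 1 => congrArg (n % ·) (pseq_add n a i j)

lemma exists_pseq_eq_zero (n : ℕ) {a : ℕ} (ha : 0 < a) : ∃ k, 0 < k ∧ pseq n a k = 0 := by
  induction a using Nat.strong_induction_on with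
  | _ a ih =>
    rcases (n % a).eq_zero_or_pos with h | h
    · exact ⟨1, one_pos, h⟩
    · obtain ⟨k, -, hk⟩ := ih (n % a) (Nat.mod_lt n ha) h
      exact ⟨1 + k, by omega, (pseq_add n a 1 k).trans hk⟩

section Orbit

variable {n a j : ℕ}

lemma Psteps_pos (ha : 0 < a) : 0 < Psteps n a :=
  (Nat.sInf_mem (exists_pseq_eq_zero n ha)).1

lemma pseq_Psteps (ha : 0 < a) : pseq n a (Psteps n a) = 0 :=
  (Nat.sInf_mem (exists_pseq_eq_zero n ha)).2

lemma Psteps_le_of_pseq_eq_zero {k : ℕ} (hk : 0 < k) (h : pseq n a k = 0) : Psteps n a ≤ k :=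
  Nat.sInf_le ⟨hk, h⟩

lemma pseq_pos_of_lt_Psteps (ha : 0 < a) (hj : j < Psteps n a) : 0 < pseq n a j := by
  rcases j.eq_zero_or_pos with rfl | hj0
  · exact ha
  · exact Nat.pos_of_ne_zero fun h => (Psteps_le_of_pseq_eq_zero hj0 h).not_gt hj

lemma pseq_succ_lt (ha : 0 < a) (hj : j < Psteps n a) : pseq n a (j + 1) < pseq n a j :=
  Nat.mod_lt n (pseq_pos_of_lt_Psteps ha hj)

lemma strictAntiOn_pseq (ha : 0 < a) : StrictAntiOn (pseq n a) (Set.Iic (Psteps n a)) :=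
  strictAntiOn_Iic_of_succ_lt fun _ hj => pseq_succ_lt ha hj

lemma Psteps_le_add_Psteps_pseq (ha : 0 < a) (hj : j < Psteps n a) :
    Psteps n a ≤ j + Psteps n (pseq n a j) := by
  have hb := pseq_pos_of_lt_Psteps ha hj
  exact Psteps_le_of_pseq_eq_zero (by have := Psteps_pos (n := n) hb; omega)
    ((pseq_add n a j _).trans (pseq_Psteps hb))

lemma le_div_pseq (ha : 0 < a) : ∀ {j}, j < Psteps n a → j ≤ n / pseq n a j
  | 0, _ => Nat.zero_le _
  | j + 1, hj =>
    (le_div_pseq ha (by omega)).trans_lt (Nat.div_lt_div_mod (pseq_pos_of_lt_Psteps ha hj))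

lemma Psteps_le_div_add_sum_card_divisors (ha : 0 < a) {D : ℕ} (hD : 0 < D) :
    Psteps n a ≤ a / D + ∑ g ∈ Ico 1 D, #(n + g).divisors := by
  classical
  set P := Psteps n a
  set jump := fun j => pseq n a j - pseq n a (j + 1)
  have hsplit := card_filter_add_card_filter_not (s := range P) (fun j => D ≤ jump j)
  have hbig : #{j ∈ range P | D ≤ jump j} ≤ a / D := by
    refine (Nat.le_div_iff_mul_le hD).2 ?_
    calc #{j ∈ range P | D ≤ jump j} * D ≤ ∑ j ∈ range P with D ≤ jump j, jump j :=
          card_nsmul_le_sum _ _ _ fun j hj => (mem_filter.1 hj).2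
      _ ≤ ∑ j ∈ range P, jump j := sum_le_sum_of_subset (filter_subset _ _)
      _ = a := by
          have := sum_range_tsub_add_eq (f := pseq n a) fun j hj => (pseq_succ_lt ha hj).le
          rwa [pseq_Psteps ha, add_zero] at this
  have hsmall : #{j ∈ range P | ¬D ≤ jump j} ≤ ∑ g ∈ Ico 1 D, #(n + g).divisors := by
    refine (card_le_card_of_injOn (pseq n a) (fun j hj => ?_) ?_).trans card_biUnion_le
    · obtain ⟨hjP, hjD⟩ := mem_filter.1 hj
      have hjP := mem_range.1 hjP
      have hpos := pseq_pos_of_lt_Psteps ha hjP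
      have hstep := pseq_succ_lt ha hjP
      have hjump : jump j = pseq n a j - pseq n a (j + 1) := rfl
      exact mem_biUnion.2 ⟨jump j, mem_Ico.2 ⟨by omega, by omega⟩,
        mem_divisors.2 ⟨Nat.dvd_add_sub_mod n hpos, by omega⟩⟩
    · exact (strictAntiOn_pseq ha).injOn.mono fun j hj =>
        Set.mem_Iic.2 (mem_range.1 (mem_filter.1 hj).1).le
  rw [card_range] at hsplit
  omega

lemma Psteps_le (ha : 0 < a) {B D : ℕ} (hB : 0 < B) (hD : 0 < D) :
    Psteps n a ≤ n / B + 1 + B / D + ∑ g ∈ Ico 1 D, #(n + g).divisors := by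
  by_cases hshort : Psteps n a ≤ n / B + 1
  · exact le_add_right (le_add_right hshort)
  set j := n / B + 1
  have hj : j < Psteps n a := not_le.1 hshort
  have hpos := pseq_pos_of_lt_Psteps ha hj
  have hsmall : pseq n a j < B := by
    by_contra! hge
    have := (le_div_pseq ha hj).trans (Nat.div_le_div_left hge hB)
    omega
  calc Psteps n a ≤ j + Psteps n (pseq n a j) := Psteps_le_add_Psteps_pseq ha hj
    _ ≤ j + (pseq n a j / D + ∑ g ∈ Ico 1 D, #(n + g).divisors) :=
        Nat.add_le_add_left (Psteps_le_div_add_sum_card_divisors hpos hD) _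
    _ ≤ j + B / D + ∑ g ∈ Ico 1 D, #(n + g).divisors := by
        have := Nat.div_le_div_right (c := D) hsmall.le
        omega

end Orbit

lemma Pmax_le (n : ℕ) {D : ℕ} (hD : 0 < D) :
    Pmax n ≤ n / D ^ 2 + 1 + D + ∑ g ∈ Ico 1 D, #(n + g).divisors :=
  Finset.sup_le fun _ ha => by
    simpa only [sq, Nat.mul_div_cancel _ hD] using
      Psteps_le (mem_Icc.1 ha).1 (Nat.mul_pos hD hD) hD

lemma sum_Ico_card_divisors_le {C ε : ℝ} (hC : 0 ≤ C) (hε : 0 ≤ ε)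
    (hdiv : ∀ m : ℕ, m ≠ 0 → (#m.divisors : ℝ) ≤ C * (m : ℝ) ^ ε) {n D : ℕ} (hD : D ≤ n + 1) :
    ((∑ g ∈ Ico 1 D, #(n + g).divisors : ℕ) : ℝ) ≤ D * (C * (2 * n : ℝ) ^ ε) := by
  push_cast
  calc ∑ g ∈ Ico 1 D, (#(n + g).divisors : ℝ) ≤ ∑ _g ∈ Ico 1 D, C * (2 * n : ℝ) ^ ε :=
        sum_le_sum fun g hg => by
          have hg := mem_Ico.1 hg
          refine (hdiv _ (by omega)).trans ?_
          have : (n + g : ℝ) ≤ 2 * n := by norm_cast; omega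
          push_cast
          gcongr
    _ ≤ D * (C * (2 * n : ℝ) ^ ε) := by
        rw [sum_const, card_Ico, nsmul_eq_mul]
        gcongr
        exact_mod_cast Nat.sub_le D 1

lemma Pmax_le_rpow {C ε : ℝ} (hC : 0 ≤ C) (hε : 0 ≤ ε)
    (hdiv : ∀ m : ℕ, m ≠ 0 → (#m.divisors : ℝ) ≤ C * (m : ℝ) ^ ε) {n : ℕ} (hn : 0 < n) :
    (Pmax n : ℝ) ≤ (4 + 2 * C * 2 ^ ε) * (n : ℝ) ^ ((1 : ℝ) / 3 + ε) := by
  set x := (n : ℝ) ^ ((1 : ℝ) / 3)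
  set D := ⌈x⌉₊
  have hn1 : (1 : ℝ) ≤ n := Nat.one_le_cast.2 hn
  have hx1 : 1 ≤ x := Real.one_le_rpow hn1 (by norm_num)
  have hxn : x ≤ n := Real.rpow_le_self_of_one_le hn1 (by norm_num)
  have hDx : (D : ℝ) < x + 1 := Nat.ceil_lt_add_one (by positivity)
  have hD : 0 < D := Nat.ceil_pos.2 (by positivity)
  have hx3 : x ^ 3 = n := by
    simpa [x, one_div] using Real.rpow_inv_natCast_pow (n := 3) (Nat.cast_nonneg n) three_ne_zero
  have hfirst : ((n / D ^ 2 : ℕ) : ℝ) ≤ x := by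
    refine Nat.cast_div_le.trans ((div_le_iff₀ (by positivity)).2 ?_)
    have hxD : x ≤ D := Nat.le_ceil x
    push_cast
    nlinarith [mul_le_mul hxD hxD (by positivity) (by positivity)]
  have hsum := sum_Ico_card_divisors_le hC hε hdiv (n := n) (D := D) (by
    have : (D : ℝ) ≤ n + 1 := by linarith
    exact_mod_cast this)
  have hN : 1 ≤ (n : ℝ) ^ ε := Real.one_le_rpow hn1 hε
  rw [Real.mul_rpow (by norm_num) (by positivity)] at hsum
  rw [Real.rpow_add (by positivity)]
  calc (Pmax n : ℝ)
      ≤ ((n / D ^ 2 : ℕ) : ℝ) + 1 + D + ((∑ g ∈ Ico 1 D, #(n + g).divisors : ℕ) : ℝ) := by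
        exact_mod_cast Pmax_le n hD
    _ ≤ x + 1 + (x + 1) + (x + 1) * (C * (2 ^ ε * n ^ ε)) := by
        gcongr
        exact hsum.trans (by gcongr)
    _ ≤ (4 + 2 * C * 2 ^ ε) * (x * n ^ ε) := by
        have : 0 ≤ C * 2 ^ ε * n ^ ε := by positivity
        nlinarith [mul_le_mul_of_nonneg_left hN (by positivity : (0 : ℝ) ≤ x)]

theorem stmt_12 : ∀ ε > (0:ℝ), ∃ C > (0:ℝ), ∀ n : ℕ, 0 < n →
    (Pmax n : ℝ) ≤ C * (n : ℝ) ^ ((1:ℝ)/3 + ε) := by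
  intro ε hε
  obtain ⟨C, hC, hdiv⟩ := exists_card_divisors_le_rpow hε
  exact ⟨4 + 2 * C * 2 ^ ε, by positivity, fun n hn => Pmax_le_rpow hC.le hε.le hdiv hn⟩
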